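/- arXiv:1503.00817 — 2 statements merged into one kernel-verified Lean document; each statement's English description precedes it below -/
import Mathlib

section
/- If (a_n) is a sequence of positive reals with n·(a_n/a_{n+1} − 1) ≥ r eventually for some real r > 1, then ∑ a_n converges. -/
/-! Writing `b n = n * a n`, Raabe's condition says `(r - 1) * a (n + 1) ≤ b n - b (n + 1)`
eventually. Since `b ≥ 0`, the partial sums of `a` telescope to at most `b N / (r - 1)`, so the
series converges (Kummer's test). -/

open Filter Finset

theorem summable_of_mul_le_sub_succ {a b : ℕ → ℝ} {c : ℝ} (ha : ∀ n, 0 ≤ a n)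
    (hb : ∀ n, 0 ≤ b n) (hc : 0 < c) (h : ∀ n, c * a n ≤ b n - b (n + 1)) : Summable a := by
  refine summable_of_sum_range_le (c := b 0 / c) ha fun m => ?_
  rw [le_div_iff₀ hc]
  calc (∑ k ∈ range m, a k) * c = ∑ k ∈ range m, c * a k := by rw [sum_mul]; simp only [mul_comm]
    _ ≤ ∑ k ∈ range m, (b k - b (k + 1)) := sum_le_sum fun k _ => h k
    _ = b 0 - b m := sum_range_sub' b m
    _ ≤ b 0 := sub_le_self _ (hb m)

theorem summable_of_eventually_mul_le_sub_succ {a b : ℕ → ℝ} {c : ℝ} (ha : ∀ n, 0 ≤ a n)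
    (hb : ∀ n, 0 ≤ b n) (hc : 0 < c) (h : ∀ᶠ n in atTop, c * a (n + 1) ≤ b n - b (n + 1)) :
    Summable a := by
  obtain ⟨N, hN⟩ := eventually_atTop.mp h
  rw [← summable_nat_add_iff (N + 1)]
  refine summable_of_mul_le_sub_succ (b := fun k => b (k + N)) (fun k => ha _) (fun k => hb _) hc
    fun k => ?_
  simpa only [← add_assoc, add_right_comm k 1 N] using hN (k + N) (Nat.le_add_left N k)

theorem sub_one_mul_le_of_le_mul_div_sub_one {x y n r : ℝ} (hy : 0 < y) (h : r ≤ n * (x / y - 1)) :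
    (r - 1) * y ≤ n * x - (n + 1) * y := by
  have hxy : r * y ≤ n * (x - y) := by
    calc r * y ≤ n * (x / y - 1) * y := mul_le_mul_of_nonneg_right h hy.le
      _ = n * (x - y) := by field_simp
  linarith

theorem raabe_convergence_test (a : ℕ → ℝ) (ha : ∀ n, 0 < a n) (r : ℝ) (hr : 1 < r)
    (h : ∀ᶠ n : ℕ in Filter.atTop, r ≤ (n : ℝ) * (a n / a (n + 1) - 1)) :
    Summable a := by
  refine summable_of_eventually_mul_le_sub_succ (b := fun n => n * a n) (c := r - 1)
    (fun n => (ha n).le) (fun n => mul_nonneg n.cast_nonneg (ha n).le) (by linarith) ?_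
  filter_upwards [h] with n hn
  push_cast
  exact sub_one_mul_le_of_le_mul_div_sub_one (ha _) hn
end

section
/- If ∑ a_n is a divergent series of positive reals, then there exists a monotone sequence (b_n) of positive reals with b_n → 0 such that ∑ a_n·b_n still diverges. -/
/-!
Take `b n = 1 / S n`, where `S n = a 0 + ⋯ + a n` increases to `∞`. Over any block `m < i ≤ n`
we have `S i ≤ S n`, so `∑ a i / S i ≥ (S n - S m) / S n = 1 - S m / S n`, which exceeds `1/2`
once `n` is large. Hence the series `∑ a n / S n` violates the Cauchy criterion.
-/

open Finset Filter Topology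

def partialSum (a : ℕ → ℝ) (n : ℕ) : ℝ :=
  ∑ i ∈ Iic n, a i

section

variable {a : ℕ → ℝ}

theorem partialSum_mono (ha : ∀ n, 0 ≤ a n) : Monotone (partialSum a) := fun _ _ hmn =>
  sum_le_sum_of_subset_of_nonneg (Iic_subset_Iic.2 hmn) fun i _ _ => ha i

theorem partialSum_pos (ha : ∀ n, 0 ≤ a n) (ha₀ : 0 < a 0) (n : ℕ) : 0 < partialSum a n :=
  ha₀.trans_le <| single_le_sum (fun i _ => ha i) (mem_Iic.2 n.zero_le)

theorem partialSum_add_sum_Ioc {m n : ℕ} (hmn : m ≤ n) :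
    partialSum a m + ∑ i ∈ Ioc m n, a i = partialSum a n := by
  rw [partialSum, partialSum, ← sum_union (Iic_disjoint_Ioc le_rfl), Iic_union_Ioc_eq_Iic hmn]

theorem tendsto_partialSum_atTop (ha : ∀ n, 0 ≤ a n) (hs : ¬ Summable a) :
    Tendsto (partialSum a) atTop atTop := by
  show Tendsto (fun n => ∑ i ∈ Iic n, a i) atTop atTop
  have h := ((not_summable_iff_tendsto_nat_atTop_of_nonneg ha).1 hs).comp (tendsto_add_atTop_nat 1)
  simpa only [Function.comp_def, Nat.range_succ_eq_Iic] using h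

theorem one_sub_div_le_sum_div_partialSum (ha : ∀ n, 0 ≤ a n) (ha₀ : 0 < a 0) {m n : ℕ}
    (hmn : m ≤ n) :
    1 - partialSum a m / partialSum a n ≤ ∑ i ∈ Ioc m n, a i / partialSum a i := by
  have hSn := partialSum_pos ha ha₀ n
  calc 1 - partialSum a m / partialSum a n
      = (∑ i ∈ Ioc m n, a i) / partialSum a n := by
        rw [← partialSum_add_sum_Ioc hmn] at hSn ⊢
        field_simp
        ring
    _ = ∑ i ∈ Ioc m n, a i / partialSum a n := sum_div _ _ _
    _ ≤ ∑ i ∈ Ioc m n, a i / partialSum a i := sum_le_sum fun i hi =>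
        div_le_div_of_nonneg_left (ha i) (partialSum_pos ha ha₀ i)
          (partialSum_mono ha (mem_Ioc.1 hi).2)

theorem not_summable_div_partialSum (ha : ∀ n, 0 ≤ a n) (ha₀ : 0 < a 0) (hs : ¬ Summable a) :
    ¬ Summable fun n => a n / partialSum a n := by
  intro hsum
  obtain ⟨s, hs_small⟩ := hsum.vanishing (Iio_mem_nhds (half_pos one_pos))
  set m := s.sup id
  have hratio : Tendsto (fun n => partialSum a m / partialSum a n) atTop (𝓝 0) :=
    tendsto_const_nhds.div_atTop (tendsto_partialSum_atTop ha hs)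
  obtain ⟨n, hn_ratio, hmn⟩ :=
    ((hratio.eventually (gt_mem_nhds (half_pos one_pos))).and (eventually_ge_atTop m)).exists
  have hdisj : Disjoint (Ioc m n) s := disjoint_left.2 fun i hi his =>
    (mem_Ioc.1 hi).1.not_ge (le_sup (f := id) his)
  have hblock := one_sub_div_le_sum_div_partialSum ha ha₀ hmn
  have hsmall : ∑ i ∈ Ioc m n, a i / partialSum a i < 1 / 2 := hs_small _ hdisj
  linarith

end

theorem exists_slower_divergent (a : ℕ → ℝ) (ha : ∀ n, 0 < a n) (hs : ¬ Summable a) :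
    ∃ b : ℕ → ℝ, Antitone b ∧ (∀ n, 0 < b n) ∧
      Filter.Tendsto b Filter.atTop (nhds 0) ∧
      ¬ Summable (fun n => a n * b n) := by
  have ha' : ∀ n, 0 ≤ a n := fun n => (ha n).le
  have hpos := partialSum_pos ha' (ha 0)
  refine ⟨fun n => (partialSum a n)⁻¹, ?_, fun n => inv_pos.2 (hpos n), ?_, ?_⟩
  · exact fun _ _ hmn => inv_anti₀ (hpos _) (partialSum_mono ha' hmn)
  · exact (tendsto_partialSum_atTop ha' hs).inv_tendsto_atTop
  · simpa only [div_eq_mul_inv] using not_summable_div_partialSum ha' (ha 0) hs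
end
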